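/- arXiv:1808.03553 — 2 statements merged into one kernel-verified Lean document; each statement's English description precedes it below -/
import Mathlib

section
/- Let A, B be strings of lengths m and n, σ a character, K' the all scores matrix of σA and B, and Diff = K' − K. Assume every row of K□ contains at most one nonzero entry and every nonzero entry of K□ equals 1. Then for all 0 ≤ i ≤ j ≤ n: Diff[i,j] = 1 if and only if k = nextmatch(i,σ,B) < ∞ and, for every row index i' with i+1 ≤ i' ≤ k, there exists a column index j' with 1 ≤ j' ≤ j such that K□[i',j'] ≠ 0 (i.e., every row of the submatrix of K□ with rows i+1,…,k and columns 1,…,j contains exactly one pivotal point). -/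
variable {α : Type*}

/-- LCS of two lists: the maximum length of a common sublist. -/
noncomputable def LCS (X Y : List α) : ℕ :=
  sSup {k | ∃ Z : List α, Z.length = k ∧ Z.Sublist X ∧ Z.Sublist Y}

/-- `substr S i j` is S[i..j]: the characters of S at (1-based) positions i+1,…,j. -/
def substr (S : List α) (i j : ℕ) : List α := (S.take j).drop i

/-- The density matrix D□ of a matrix D. -/
def density (D : ℕ → ℕ → ℤ) (i j : ℕ) : ℤ :=
  D i j + D (i - 1) (j - 1) - D (i - 1) j - D i (j - 1)

/-- The all scores matrix K of A and B: K[i,j] = LCS(B[i..j], A) if i ≤ j, else j - i. -/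
noncomputable def Kmat (A B : List α) (i j : ℕ) : ℤ :=
  if i ≤ j then (LCS (substr B i j) A : ℤ) else (j : ℤ) - (i : ℤ)

/-- The all scores matrix P of A and B: P[i,j] = LCS(B[i..n], A[0..j]). -/
noncomputable def Pmat (A B : List α) (i j : ℕ) : ℤ :=
  (LCS (substr B i B.length) (substr A 0 j) : ℤ)

/-- nextmatch(i,σ,B): minimum (1-based) position i' with i < i' ≤ |B| and B[i'] = σ; ⊤ (∞) if none. -/
noncomputable def nextmatch (i : ℕ) (σ : α) (B : List α) : ℕ∞ :=
  sInf {k : ℕ∞ | ∃ k' : ℕ, k = (k' : ℕ∞) ∧ i < k' ∧ k' ≤ B.length ∧ B[k' - 1]? = some σ}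

/-- prevmatch(j,σ,B): maximum (1-based) position i' with 1 ≤ i' ≤ j and B[i'] = σ; ⊥ (−∞) if none. -/
noncomputable def prevmatch (j : ℕ) (σ : α) (B : List α) : WithBot ℕ :=
  sSup {k : WithBot ℕ | ∃ k' : ℕ, k = (k' : WithBot ℕ) ∧ 1 ≤ k' ∧ k' ≤ j ∧ B[k' - 1]? = some σ}

/-!
Write `X = B[i..j]`. If `σ ∉ X`, prepending `σ` to `A` does not change `LCS X ·`, so
`Diff[i,j] = 0`; on the other side `k = nextmatch(i,σ,B) > j`, and row `k` of `K□` vanishes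
on columns `1..j` because `K[i,j] = j - i` below the diagonal.

If `σ ∈ X`, its first occurrence is at `k = nextmatch(i,σ,B) ≤ j`. A common subsequence of `X`
and `σA` either avoids the leading `σ` or may be assumed to match it with that first occurrence,
so `LCS(X, σA) = max (LCS(X, A)) (LCS(B[k..j], A) + 1)`, i.e. `Diff[i,j] = 1` iff
`K[i,j] = K[k,j]`. Telescoping along row `i'` gives
`K[i'-1,j] - K[i',j] = 1 - ∑_{j' ≤ j} K□[i',j']`, which is `0` or `1` according as row `i'` has a
pivotal point in columns `1..j`. These steps are nonnegative, so `K[i,j] = K[k,j]` iff every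
row `i+1, …, k` has one.
-/

section LCS

variable {X X' Y P S : List α} {σ : α}

lemma bddAbove_commonSublist_lengths (X Y : List α) :
    BddAbove {k | ∃ Z : List α, Z.length = k ∧ Z.Sublist X ∧ Z.Sublist Y} :=
  ⟨X.length, by rintro _ ⟨Z, rfl, hZX, -⟩; exact hZX.length_le⟩

lemma exists_sublist_length_eq_lcs (X Y : List α) :
    ∃ Z : List α, Z.length = LCS X Y ∧ Z.Sublist X ∧ Z.Sublist Y := by
  refine Nat.sSup_mem ?_ (bddAbove_commonSublist_lengths X Y)
  exact ⟨0, [], rfl, List.nil_sublist X, List.nil_sublist Y⟩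

lemma length_le_lcs {Z : List α} (hX : Z.Sublist X) (hY : Z.Sublist Y) :
    Z.length ≤ LCS X Y :=
  le_csSup (bddAbove_commonSublist_lengths X Y) ⟨Z, rfl, hX, hY⟩

lemma lcs_le_length_left : LCS X Y ≤ X.length := by
  obtain ⟨Z, hZ, hZX, _⟩ := exists_sublist_length_eq_lcs X Y
  exact hZ ▸ hZX.length_le

lemma lcs_nil_left : LCS [] Y = 0 :=
  Nat.eq_zero_of_le_zero lcs_le_length_left

lemma lcs_mono_left (h : X.Sublist X') : LCS X Y ≤ LCS X' Y := by
  obtain ⟨Z, hZ, hZX, hZY⟩ := exists_sublist_length_eq_lcs X Y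
  exact hZ ▸ length_le_lcs (hZX.trans h) hZY

lemma lcs_le_lcs_cons_right : LCS X Y ≤ LCS X (σ :: Y) := by
  obtain ⟨Z, hZ, hZX, hZY⟩ := exists_sublist_length_eq_lcs X Y
  exact hZ ▸ length_le_lcs hZX (hZY.cons σ)

lemma lcs_cons_right_of_not_mem (h : σ ∉ X) : LCS X (σ :: Y) = LCS X Y := by
  refine le_antisymm ?_ lcs_le_lcs_cons_right
  obtain ⟨Z, hZ, hZX, hZY⟩ := exists_sublist_length_eq_lcs X (σ :: Y)
  rcases List.sublist_cons_iff.mp hZY with hZY | ⟨Z', rfl, -⟩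
  · exact hZ ▸ length_le_lcs hZX hZY
  · exact absurd (hZX.subset List.mem_cons_self) h

lemma sublist_of_cons_sublist_append_cons {Z : List α} (h : σ ∉ P)
    (hZ : (σ :: Z).Sublist (P ++ σ :: S)) : Z.Sublist S := by
  obtain ⟨_ | ⟨τ, Z₁⟩, Z₂, hZ, hZ₁, hZ₂⟩ := List.sublist_append_iff.mp hZ
  · rw [List.nil_append] at hZ
    exact List.cons_sublist_cons.mp (hZ ▸ hZ₂)
  · obtain ⟨rfl, -⟩ := List.cons.inj hZ
    exact absurd (hZ₁.subset List.mem_cons_self) h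

lemma lcs_append_cons_cons (h : σ ∉ P) :
    LCS (P ++ σ :: S) (σ :: Y) = max (LCS (P ++ σ :: S) Y) (LCS S Y + 1) := by
  refine le_antisymm ?_ (max_le lcs_le_lcs_cons_right ?_)
  · obtain ⟨Z, hZ, hZX, hZY⟩ := exists_sublist_length_eq_lcs (P ++ σ :: S) (σ :: Y)
    rcases List.sublist_cons_iff.mp hZY with hZY | ⟨Z', rfl, hZ'Y⟩
    · exact le_max_of_le_left (hZ ▸ length_le_lcs hZX hZY)
    · refine le_max_of_le_right ?_
      rw [← hZ, List.length_cons]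
      exact Nat.succ_le_succ (length_le_lcs (sublist_of_cons_sublist_append_cons h hZX) hZ'Y)
  · obtain ⟨Z, hZ, hZS, hZY⟩ := exists_sublist_length_eq_lcs S Y
    rw [← hZ]
    exact length_le_lcs ((hZS.cons_cons σ).trans (List.sublist_append_right P _))
      (hZY.cons_cons σ)

end LCS

section Substr

variable {B : List α} {i j k : ℕ} {σ : α}

lemma substr_self (B : List α) (i : ℕ) : substr B i i = [] :=
  List.drop_eq_nil_of_le (List.length_take_le i B)

lemma substr_sublist_substr (B : List α) (h : i ≤ k) (j : ℕ) :
    (substr B k j).Sublist (substr B i j) := by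
  rw [substr, substr, ← Nat.add_sub_cancel' h, ← List.drop_drop]
  exact List.drop_sublist _ _

lemma mem_substr_iff : σ ∈ substr B i j ↔ ∃ p, i ≤ p ∧ p < j ∧ B[p]? = some σ := by
  simp only [substr, List.mem_iff_getElem?, List.getElem?_drop, List.getElem?_take]
  constructor
  · rintro ⟨q, hq⟩
    split_ifs at hq with h
    exact ⟨i + q, by omega, h, hq⟩
  · rintro ⟨p, hip, hpj, hp⟩
    exact ⟨p - i, by rwa [Nat.add_sub_cancel' hip, if_pos hpj]⟩

lemma substr_append {a : ℕ} (hia : i ≤ a) (haj : a ≤ j) :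
    substr B i j = substr B i a ++ substr B a j := by
  unfold substr
  conv_lhs => rw [← List.take_append_drop a (B.take j), List.take_take, min_eq_left haj]
  rw [List.drop_append, List.length_take]
  rcases le_total a B.length with h | h
  · rw [min_eq_left h, Nat.sub_eq_zero_of_le hia, List.drop_zero]
  · rw [List.drop_eq_nil_of_le (as := B.take j) (by grind)]
    simp

lemma substr_eq_cons {p : ℕ} (hpj : p < j) (hp : B[p]? = some σ) :
    substr B p j = σ :: substr B (p + 1) j := by
  obtain ⟨hpB, hσ⟩ := List.getElem?_eq_some_iff.mp hp
  unfold substr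
  rw [List.drop_eq_getElem_cons (by grind), List.getElem_take, hσ]

lemma substr_eq_append_cons (hik : i < k) (hkj : k ≤ j) (hσ : B[k - 1]? = some σ) :
    substr B i j = substr B i (k - 1) ++ σ :: substr B k j := by
  rw [substr_append (a := k - 1) (by omega) (by omega), substr_eq_cons (by omega) hσ,
    Nat.sub_add_cancel (by omega)]

end Substr

section Nextmatch

variable {B : List α} {i j k : ℕ} {σ : α}

lemma nextmatch_le (hik : i < k) (hkB : k ≤ B.length) (hσ : B[k - 1]? = some σ) :
    nextmatch i σ B ≤ k :=
  sInf_le ⟨k, rfl, hik, hkB, hσ⟩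

lemma spec_of_nextmatch_eq_coe (h : nextmatch i σ B = k) :
    i < k ∧ k ≤ B.length ∧ B[k - 1]? = some σ := by
  have hne :
      {k : ℕ∞ | ∃ k' : ℕ, k = k' ∧ i < k' ∧ k' ≤ B.length ∧ B[k' - 1]? = some σ}.Nonempty := by
    by_contra hempty
    rw [Set.not_nonempty_iff_eq_empty] at hempty
    rw [nextmatch, hempty, sInf_empty] at h
    exact ENat.top_ne_natCast k h
  obtain ⟨k', hk', hspec⟩ := csInf_mem hne
  rw [← nextmatch, h, Nat.cast_inj] at hk'
  exact hk' ▸ hspec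

lemma nextmatch_le_succ {p : ℕ} (hip : i ≤ p) (hp : B[p]? = some σ) :
    nextmatch i σ B ≤ (p + 1 : ℕ) :=
  nextmatch_le (Nat.lt_succ_of_le hip) (List.getElem?_eq_some_iff.mp hp).1 hp

lemma exists_nextmatch_of_mem_substr (h : σ ∈ substr B i j) :
    ∃ k : ℕ, nextmatch i σ B = k ∧ i < k ∧ k ≤ j ∧ B[k - 1]? = some σ ∧
      σ ∉ substr B i (k - 1) := by
  obtain ⟨p, hip, hpj, hp⟩ := mem_substr_iff.mp h
  have hle := nextmatch_le_succ hip hp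
  obtain ⟨k, hk⟩ := ENat.ne_top_iff_exists.mp (ne_top_of_le_ne_top (ENat.natCast_ne_top _) hle)
  rw [← hk, Nat.cast_le] at hle
  obtain ⟨hik, -, hσ⟩ := spec_of_nextmatch_eq_coe hk.symm
  refine ⟨k, hk.symm, hik, by omega, hσ, fun hmem => ?_⟩
  obtain ⟨q, hiq, hqk, hq⟩ := mem_substr_iff.mp hmem
  have := nextmatch_le_succ hiq hq
  rw [← hk, Nat.cast_le] at this
  omega

end Nextmatch

section Density

lemma sum_density_row (D : ℕ → ℕ → ℤ) (i j : ℕ) :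
    ∑ j' ∈ Finset.Icc 1 j, density D i j' = D i j - D (i - 1) j - D i 0 + D (i - 1) 0 := by
  induction j with
  | zero => simp
  | succ j ih =>
    rw [Finset.sum_Icc_succ_top (by omega), ih, density, Nat.add_sub_cancel]
    ring

def RowHasPivot (D : ℕ → ℕ → ℤ) (i j : ℕ) : Prop :=
  ∃ j', 1 ≤ j' ∧ j' ≤ j ∧ density D i j' ≠ 0

open Classical in
lemma sum_density_row_eq_ite {D : ℕ → ℕ → ℤ} {i j : ℕ}
    (hRow : ∀ j₁ j₂, 1 ≤ j₁ → j₁ ≤ j → 1 ≤ j₂ → j₂ ≤ j →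
      density D i j₁ ≠ 0 → density D i j₂ ≠ 0 → j₁ = j₂)
    (hVal : ∀ j', 1 ≤ j' → j' ≤ j → density D i j' ≠ 0 → density D i j' = 1) :
    ∑ j' ∈ Finset.Icc 1 j, density D i j' = if RowHasPivot D i j then 1 else 0 := by
  split_ifs with h
  · obtain ⟨j₀, h1, h2, h0⟩ := h
    rw [Finset.sum_eq_single_of_mem j₀ (Finset.mem_Icc.mpr ⟨h1, h2⟩), hVal j₀ h1 h2 h0]
    intro j' hj' hne
    obtain ⟨h1', h2'⟩ := Finset.mem_Icc.mp hj'
    by_contra h'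
    exact hne (hRow j' j₀ h1' h2' h1 h2 h' h0)
  · refine Finset.sum_eq_zero fun j' hj' => ?_
    by_contra h'
    exact h ⟨j', (Finset.mem_Icc.mp hj').1, (Finset.mem_Icc.mp hj').2, h'⟩

lemma sub_eq_sum_Ioc (f : ℕ → ℤ) {i k : ℕ} (h : i ≤ k) :
    f i - f k = ∑ i' ∈ Finset.Ioc i k, (f (i' - 1) - f i') := by
  induction k, h using Nat.le_induction with
  | base => simp
  | succ k hik ih =>
    rw [Finset.sum_Ioc_succ_top hik, ← ih, Nat.add_sub_cancel]
    ring

lemma eq_iff_forall_Ioc_pred_eq (f : ℕ → ℤ) {i k : ℕ} (h : i ≤ k)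
    (hf : ∀ i' ∈ Finset.Ioc i k, f i' ≤ f (i' - 1)) :
    f i = f k ↔ ∀ i' ∈ Finset.Ioc i k, f (i' - 1) = f i' := by
  rw [← sub_eq_zero, sub_eq_sum_Ioc f h,
    Finset.sum_eq_zero_iff_of_nonneg fun i' hi' => sub_nonneg.mpr (hf i' hi')]
  simp only [sub_eq_zero]

end Density

section Kmat

variable (A B : List α) {i j k : ℕ}

lemma Kmat_of_le (h : i ≤ j) : Kmat A B i j = LCS (substr B i j) A := if_pos h

lemma Kmat_of_ge (h : j ≤ i) : Kmat A B i j = (j : ℤ) - i := by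
  rcases h.eq_or_lt with rfl | h
  · rw [Kmat_of_le A B le_rfl, substr_self, lcs_nil_left, sub_self, Nat.cast_zero]
  · exact if_neg (not_le.mpr h)

lemma density_Kmat_of_lt (h1 : 1 ≤ j) (h2 : j < i) : density (Kmat A B) i j = 0 := by
  rw [density, Kmat_of_ge A B h2.le, Kmat_of_ge A B (by omega), Kmat_of_ge A B (by omega),
    Kmat_of_ge A B (by omega)]
  push_cast [Nat.cast_sub h1, Nat.cast_sub (h1.trans_lt h2).le]
  ring

lemma Kmat_pred_sub (hi : 1 ≤ i) (j : ℕ) :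
    Kmat A B (i - 1) j - Kmat A B i j = 1 - ∑ j' ∈ Finset.Icc 1 j, density (Kmat A B) i j' := by
  rw [sum_density_row, Kmat_of_ge A B (Nat.zero_le i), Kmat_of_ge A B (Nat.zero_le (i - 1))]
  push_cast [Nat.cast_sub hi]
  ring

lemma Kmat_eq_iff_forall_rowHasPivot {n : ℕ}
    (hRow : ∀ i, 1 ≤ i → i ≤ n → ∀ j₁ j₂, 1 ≤ j₁ → j₁ ≤ n → 1 ≤ j₂ → j₂ ≤ n →
      density (Kmat A B) i j₁ ≠ 0 → density (Kmat A B) i j₂ ≠ 0 → j₁ = j₂)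
    (hVal : ∀ i, 1 ≤ i → i ≤ n → ∀ j, 1 ≤ j → j ≤ n →
      density (Kmat A B) i j ≠ 0 → density (Kmat A B) i j = 1)
    (hik : i ≤ k) (hkn : k ≤ n) (hjn : j ≤ n) :
    Kmat A B i j = Kmat A B k j ↔
      ∀ i', i + 1 ≤ i' → i' ≤ k → RowHasPivot (Kmat A B) i' j := by
  classical
  have hstep : ∀ i' ∈ Finset.Ioc i k, Kmat A B (i' - 1) j - Kmat A B i' j =
      if RowHasPivot (Kmat A B) i' j then 0 else 1 := by
    intro i' hi'
    obtain ⟨h1, h2⟩ := Finset.mem_Ioc.mp hi'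
    rw [Kmat_pred_sub A B (by omega), sum_density_row_eq_ite
      (fun j₁ j₂ a b c d => hRow i' (by omega) (by omega) j₁ j₂ a (by omega) c (by omega))
      (fun j' a b => hVal i' (by omega) (by omega) j' a (by omega))]
    split_ifs <;> norm_num
  have hiff : ∀ i' ∈ Finset.Ioc i k,
      Kmat A B (i' - 1) j = Kmat A B i' j ↔ RowHasPivot (Kmat A B) i' j := by
    intro i' hi'
    have := hstep i' hi'
    split_ifs at this with h <;> simp only [h, iff_true, iff_false] <;> omega
  rw [eq_iff_forall_Ioc_pred_eq (fun r => Kmat A B r j) hik fun i' hi' => by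
    have := hstep i' hi'; split_ifs at this <;> omega]
  exact forall_congr' fun i' =>
    ⟨fun h h1 h2 => (hiff i' (Finset.mem_Ioc.mpr ⟨h1, h2⟩)).mp (h (Finset.mem_Ioc.mpr ⟨h1, h2⟩)),
      fun h hi' => (hiff i' hi').mpr (h (Finset.mem_Ioc.mp hi').1 (Finset.mem_Ioc.mp hi').2)⟩

end Kmat

section KmatCons

variable (A B : List α) {i j k : ℕ} {σ : α}

lemma Kmat_cons_of_not_mem (h : σ ∉ substr B i j) : Kmat (σ :: A) B i j = Kmat A B i j := by
  unfold Kmat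
  split_ifs
  · rw [lcs_cons_right_of_not_mem h]
  · rfl

lemma Kmat_cons_sub_eq_one_iff (hik : i < k) (hkj : k ≤ j) (hσ : B[k - 1]? = some σ)
    (hP : σ ∉ substr B i (k - 1)) :
    Kmat (σ :: A) B i j - Kmat A B i j = 1 ↔ Kmat A B i j = Kmat A B k j := by
  have hS := lcs_mono_left (Y := A) (substr_sublist_substr B hik.le j)
  rw [substr_eq_append_cons hik hkj hσ] at hS
  rw [Kmat_of_le _ B (hik.le.trans hkj), Kmat_of_le A B (hik.le.trans hkj), Kmat_of_le A B hkj,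
    substr_eq_append_cons hik hkj hσ, lcs_append_cons_cons hP]
  omega

end KmatCons

theorem stmt_6_general {α : Type*} (A B : List α) (n : ℕ) (σ : α)
    (hRow : ∀ i, 1 ≤ i → i ≤ n → ∀ j₁ j₂, 1 ≤ j₁ → j₁ ≤ n → 1 ≤ j₂ → j₂ ≤ n →
      density (Kmat A B) i j₁ ≠ 0 → density (Kmat A B) i j₂ ≠ 0 → j₁ = j₂)
    (hVal : ∀ i, 1 ≤ i → i ≤ n → ∀ j, 1 ≤ j → j ≤ n →
      density (Kmat A B) i j ≠ 0 → density (Kmat A B) i j = 1) :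
    ∀ i j : ℕ, i ≤ j → j ≤ n →
      (Kmat (σ :: A) B i j - Kmat A B i j = 1 ↔
        ∃ k : ℕ, nextmatch i σ B = (k : ℕ∞) ∧
          ∀ i', i + 1 ≤ i' → i' ≤ k →
            ∃ j', 1 ≤ j' ∧ j' ≤ j ∧ density (Kmat A B) i' j' ≠ 0) := by
  intro i j _ hjn
  by_cases hσ : σ ∈ substr B i j
  · obtain ⟨k, hk, hik, hkj, hBk, hP⟩ := exists_nextmatch_of_mem_substr hσ
    rw [Kmat_cons_sub_eq_one_iff A B hik hkj hBk hP,
      Kmat_eq_iff_forall_rowHasPivot A B hRow hVal hik.le (hkj.trans hjn) hjn]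
    refine ⟨fun h => ⟨k, hk, h⟩, fun ⟨k', hk', h⟩ => ?_⟩
    rwa [← Nat.cast_inj.mp (hk.symm.trans hk')] at h
  · rw [Kmat_cons_of_not_mem A B hσ, sub_self]
    refine iff_of_false zero_ne_one fun ⟨k, hk, hrows⟩ => ?_
    obtain ⟨hik, -, hBk⟩ := spec_of_nextmatch_eq_coe hk
    obtain ⟨j', h1, h2, hpivot⟩ := hrows k hik le_rfl
    have hjk : j < k := by
      by_contra hkj
      exact hσ (mem_substr_iff.mpr ⟨k - 1, by omega, by omega, hBk⟩)
    exact hpivot (density_Kmat_of_lt A B h1 (by omega))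

/-- Diff[i,j] = 1 iff k = nextmatch(i,σ,B) < ∞ and every row of the
submatrix of K□ with rows i+1,…,k and columns 1,…,j contains a pivotal point. -/
theorem stmt_6 {α : Type*} (A B : List α) (m n : ℕ)
    (hA : A.length = m) (hB : B.length = n) (σ : α)
    (hRow : ∀ i, 1 ≤ i → i ≤ n → ∀ j₁ j₂, 1 ≤ j₁ → j₁ ≤ n → 1 ≤ j₂ → j₂ ≤ n →
      density (Kmat A B) i j₁ ≠ 0 → density (Kmat A B) i j₂ ≠ 0 → j₁ = j₂)
    (hVal : ∀ i, 1 ≤ i → i ≤ n → ∀ j, 1 ≤ j → j ≤ n →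
      density (Kmat A B) i j ≠ 0 → density (Kmat A B) i j = 1) :
    ∀ i j : ℕ, i ≤ j → j ≤ n →
      (Kmat (σ :: A) B i j - Kmat A B i j = 1 ↔
        ∃ k : ℕ, nextmatch i σ B = (k : ℕ∞) ∧
          ∀ i', i + 1 ≤ i' → i' ≤ k →
            ∃ j', 1 ≤ j' ∧ j' ≤ j ∧ density (Kmat A B) i' j' ≠ 0) :=
  stmt_6_general A B n σ hRow hVal
end

section
/- Let A, B be strings of lengths m and n, σ a character, and define Diff[i,j] = LCS(B[i..n], σ·A[0..j]) − P[i,j] for (i,j) ∈ [0:n]×[0:m]. Assume every entry of the density matrix P□ is nonpositive. Then for all 0 ≤ i ≤ n and 1 ≤ j ≤ m, the pair (i,j) is a step index of Diff (i.e., Diff[i,j] ≠ Diff[i,j−1]) if and only if k = nextmatch(i,σ,B) < ∞ and j = min{ j' ∈ [1:m] : there exists i' with i+1 ≤ i' ≤ k and P□[i',j'] ≠ 0 } (the minimum column index among all pivotal points of P□ in rows i+1,…,k). -/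
variable {α : Type*}

/-!
Let `Y = B[i..n]` and let `k` be the first position after `i` where `σ` occurs in `B`. A common
subsequence of `Y` and `σ·W` either ignores the leading `σ` or may be taken to match it with `B[k]`,
so `LCS(Y, σ·W) = max (P[i,j], P[k,j] + 1)` for `W = A[0..j]`, and `Diff[i,j] = 1` exactly when the
row gap `P[i,j] - P[k,j]` vanishes. The gap is `0` at `j = 0`, and by telescoping its increment from
column `j - 1` to `j` is minus the sum of `P□[i',j]` over the rows `i < i' ≤ k`. As these entries
are nonpositive, the gap is nondecreasing and increases at column `j` iff that column holds a
pivotal point in those rows. Hence `Diff` steps exactly at the first such column. If `σ` does not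
occur in `Y`, the leading `σ` is useless and `Diff` is identically `0`.
-/

open Finset
open scoped List

section LCS

variable {X X' Y Y' W Z : List α}

lemma bddAbove_LCS_set (X Y : List α) :
    BddAbove {k | ∃ Z : List α, Z.length = k ∧ Z <+ X ∧ Z <+ Y} :=
  ⟨X.length, by rintro _ ⟨Z, rfl, hX, -⟩; exact hX.length_le⟩

lemma exists_sublist_length_eq_LCS (X Y : List α) :
    ∃ Z : List α, Z.length = LCS X Y ∧ Z <+ X ∧ Z <+ Y := by
  refine Nat.sSup_mem ?_ (bddAbove_LCS_set X Y)
  exact ⟨0, [], rfl, List.nil_sublist _, List.nil_sublist _⟩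

lemma length_le_LCS (hX : Z <+ X) (hY : Z <+ Y) : Z.length ≤ LCS X Y :=
  le_csSup (bddAbove_LCS_set X Y) ⟨Z, rfl, hX, hY⟩

lemma LCS_le {k : ℕ} (h : ∀ Z : List α, Z <+ X → Z <+ Y → Z.length ≤ k) :
    LCS X Y ≤ k := by
  obtain ⟨Z, hZ, hX, hY⟩ := exists_sublist_length_eq_LCS X Y
  exact hZ ▸ h Z hX hY

lemma LCS_mono (hX : X <+ X') (hY : Y <+ Y') : LCS X Y ≤ LCS X' Y' :=
  LCS_le fun _ hZX hZY => length_le_LCS (hZX.trans hX) (hZY.trans hY)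

@[simp]
lemma LCS_nil_right (X : List α) : LCS X [] = 0 :=
  Nat.le_zero.mp (LCS_le fun _ _ hY => by simp [List.sublist_nil.mp hY])

lemma LCS_cons_right_of_not_mem {σ : α} (h : σ ∉ X) : LCS X (σ :: Y) = LCS X Y := by
  refine le_antisymm (LCS_le fun Z hX hY => ?_) (LCS_mono (.refl X) (List.sublist_cons_self σ Y))
  rcases List.sublist_cons_iff.mp hY with hY | ⟨r, rfl, -⟩
  · exact length_le_LCS hX hY
  · exact absurd (hX.mem List.mem_cons_self) h

lemma LCS_append_cons_cons {σ : α} {Y₁ Y₂ : List α} (h : σ ∉ Y₁) :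
    LCS (Y₁ ++ σ :: Y₂) (σ :: W) = max (LCS (Y₁ ++ σ :: Y₂) W) (LCS Y₂ W + 1) := by
  refine le_antisymm (LCS_le fun Z hY hW => ?_) (max_le ?_ ?_)
  · rcases List.sublist_cons_iff.mp hW with hW | ⟨r, rfl, hr⟩
    · exact le_max_of_le_left (length_le_LCS hY hW)
    · obtain ⟨_ | ⟨a, l₁⟩, l₂, hsplit, h₁, h₂⟩ := List.sublist_append_iff.mp hY
      · rw [List.nil_append] at hsplit
        subst hsplit
        exact le_max_of_le_right (by simpa using length_le_LCS (List.cons_sublist_cons.mp h₂) hr)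
      · obtain ⟨rfl, -⟩ := List.cons.inj (hsplit.trans (List.cons_append ..))
        exact absurd (h₁.mem List.mem_cons_self) h
  · exact LCS_mono (.refl _) (List.sublist_cons_self σ W)
  · obtain ⟨Z, hZ, hY₂, hW⟩ := exists_sublist_length_eq_LCS Y₂ W
    simpa [hZ] using length_le_LCS
      ((List.cons_sublist_cons.mpr hY₂).trans (List.sublist_append_right Y₁ _))
      (List.cons_sublist_cons.mpr hW)

end LCS

lemma eq_zero_and_ne_zero_iff_first_change {f : ℕ → ℤ} {m j : ℕ} (h0 : f 0 = 0)
    (hmono : ∀ t, 1 ≤ t → t ≤ m → f (t - 1) ≤ f t) (hj1 : 1 ≤ j) (hjm : j ≤ m) :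
    (f (j - 1) = 0 ∧ f j ≠ 0) ↔
      f (j - 1) ≠ f j ∧ ∀ t, 1 ≤ t → t ≤ m → f (t - 1) ≠ f t → j ≤ t := by
  have hf : MonotoneOn f (Set.Iic m) := monotoneOn_of_le_add_one Set.ordConnected_Iic
    fun a _ _ ha => by simpa using hmono (a + 1) (by omega) ha
  constructor
  · rintro ⟨hj, hj'⟩
    refine ⟨by rwa [hj, ne_comm], fun t ht1 htm ht => ?_⟩
    by_contra! htj
    have h1 : f 0 ≤ f (t - 1) := hf (by simp) (by simp; omega) (Nat.zero_le _)
    have h2 : f t ≤ f (j - 1) := hf (by simp; omega) (by simp; omega) (by omega)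
    have h3 := hmono t ht1 htm
    omega
  · rintro ⟨hne, hfirst⟩
    have hzero : ∀ t ≤ j - 1, f t = 0 := by
      intro t ht
      induction t with
      | zero => exact h0
      | succ t ih =>
        have := mt (hfirst (t + 1) (by omega) (by omega))
        simp only [Nat.add_sub_cancel, not_le, not_not] at this
        rw [← this (by omega), ih (by omega)]
    exact ⟨hzero (j - 1) le_rfl, fun h => hne (by rw [hzero (j - 1) le_rfl, h])⟩

section Density

variable (D : ℕ → ℕ → ℤ) {i k : ℕ}

lemma sum_density_Ioc (hik : i ≤ k) (j : ℕ) :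
    ∑ i' ∈ Ioc i k, density D i' j = (D i (j - 1) - D k (j - 1)) - (D i j - D k j) := by
  induction k, hik using Nat.le_induction with
  | base => simp
  | succ k hik ih =>
    rw [sum_Ioc_succ_top hik, ih, density, Nat.add_sub_cancel]
    ring

variable {D} {m j : ℕ}

lemma sub_le_sub_of_density_nonpos (hik : i ≤ k)
    (hD : ∀ i', i + 1 ≤ i' → i' ≤ k → density D i' j ≤ 0) :
    D i (j - 1) - D k (j - 1) ≤ D i j - D k j := by
  have := sum_nonpos fun i' hi' => hD i' (mem_Ioc.mp hi').1 (mem_Ioc.mp hi').2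
  linarith [sum_density_Ioc D hik j]

lemma sub_ne_sub_iff_exists_density_ne_zero (hik : i ≤ k)
    (hD : ∀ i', i + 1 ≤ i' → i' ≤ k → density D i' j ≤ 0) :
    D i (j - 1) - D k (j - 1) ≠ D i j - D k j ↔
      ∃ i', i + 1 ≤ i' ∧ i' ≤ k ∧ density D i' j ≠ 0 := by
  have hnonpos : ∀ i' ∈ Ioc i k, density D i' j ≤ 0 := fun i' hi' =>
    hD i' (mem_Ioc.mp hi').1 (mem_Ioc.mp hi').2
  rw [← sub_ne_zero, ← sum_density_Ioc D hik, Ne, sum_eq_zero_iff_of_nonpos hnonpos]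
  simp only [not_forall, mem_Ioc, exists_prop, and_assoc]
  exact Iff.rfl

theorem sub_eq_zero_and_ne_zero_iff_first_pivot_column (hik : i ≤ k)
    (hD : ∀ i', i + 1 ≤ i' → i' ≤ k → ∀ t, 1 ≤ t → t ≤ m → density D i' t ≤ 0)
    (h0 : D i 0 = D k 0) (hj1 : 1 ≤ j) (hjm : j ≤ m) :
    (D i (j - 1) - D k (j - 1) = 0 ∧ D i j - D k j ≠ 0) ↔
      (∃ i', i + 1 ≤ i' ∧ i' ≤ k ∧ density D i' j ≠ 0) ∧
      ∀ j', 1 ≤ j' → j' ≤ m →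
        (∃ i', i + 1 ≤ i' ∧ i' ≤ k ∧ density D i' j' ≠ 0) → j ≤ j' := by
  have hcol t (ht1 : 1 ≤ t) (htm : t ≤ m) :
      ∀ i', i + 1 ≤ i' → i' ≤ k → density D i' t ≤ 0 :=
    fun i' h1 h2 => hD i' h1 h2 t ht1 htm
  rw [eq_zero_and_ne_zero_iff_first_change (f := fun t => D i t - D k t) (sub_eq_zero.mpr h0)
    (fun t ht1 htm => sub_le_sub_of_density_nonpos hik (hcol t ht1 htm)) hj1 hjm,
    sub_ne_sub_iff_exists_density_ne_zero hik (hcol j hj1 hjm)]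
  refine and_congr_right' (forall₃_congr fun t ht1 htm => ?_)
  rw [sub_ne_sub_iff_exists_density_ne_zero hik (hcol t ht1 htm)]

end Density

@[simp]
lemma substr_length (S : List α) (i : ℕ) : substr S i S.length = S.drop i := by
  simp [substr]

@[simp]
lemma substr_zero (S : List α) (j : ℕ) : substr S 0 j = S.take j := by
  simp [substr]

lemma Pmat_eq (A B : List α) (i j : ℕ) : Pmat A B i j = LCS (B.drop i) (A.take j) := by
  simp [Pmat]

lemma nextmatch_eq_top_of_not_mem {σ : α} {B : List α} {i : ℕ} (h : σ ∉ B.drop i) :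
    nextmatch i σ B = ⊤ := by
  refine sInf_eq_top.mpr ?_
  rintro _ ⟨k, rfl, hik, -, hk⟩
  refine absurd (List.mem_of_getElem? (i := k - 1 - i) ?_) h
  rwa [List.getElem?_drop, show i + (k - 1 - i) = k - 1 by omega]

lemma nextmatch_eq_of_drop_eq {σ : α} {B Y₁ Y₂ : List α} {i : ℕ}
    (hB : B.drop i = Y₁ ++ σ :: Y₂) (hY₁ : σ ∉ Y₁) :
    nextmatch i σ B = ((i + Y₁.length + 1 : ℕ) : ℕ∞) := by
  have hlen : i + Y₁.length + 1 ≤ B.length := by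
    have := congrArg List.length hB
    simp only [List.length_drop, List.length_append, List.length_cons] at this
    omega
  refine IsLeast.csInf_eq ⟨⟨_, rfl, by omega, hlen, ?_⟩, ?_⟩
  · rw [Nat.add_sub_cancel, ← List.getElem?_drop, hB]
    simp
  · rintro _ ⟨k, rfl, hik, -, hk⟩
    by_contra hlt
    replace hlt : k < i + Y₁.length + 1 := by exact_mod_cast not_le.mp hlt
    have hk' : (B.drop i)[k - 1 - i]? = some σ := by
      rwa [List.getElem?_drop, show i + (k - 1 - i) = k - 1 by omega]
    rw [hB, List.getElem?_append_left (by omega)] at hk'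
    exact hY₁ (List.mem_of_getElem? hk')

theorem exists_nextmatch_eq_of_mem {σ : α} {B : List α} {i : ℕ} (h : σ ∈ B.drop i) :
    ∃ k : ℕ, nextmatch i σ B = k ∧ i < k ∧ k ≤ B.length ∧
      ∃ Y₁, σ ∉ Y₁ ∧ B.drop i = Y₁ ++ σ :: B.drop k := by
  classical
  obtain ⟨Y₁, Y₂, hY₁, hB, -⟩ := List.exists_erase_eq h
  have hY₂ : B.drop (i + Y₁.length + 1) = Y₂ := by
    rw [add_assoc, ← List.drop_drop, hB]
    simp
  have hlen := congrArg List.length hB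
  simp only [List.length_drop, List.length_append, List.length_cons] at hlen
  exact ⟨_, nextmatch_eq_of_drop_eq hB hY₁, by omega, by omega, Y₁, hY₁, hY₂ ▸ hB⟩

lemma Pmat_le_Pmat_of_le (A B : List α) {i k : ℕ} (hik : i ≤ k) (j : ℕ) :
    Pmat A B k j ≤ Pmat A B i j := by
  simp only [Pmat_eq, Nat.cast_le]
  exact LCS_mono (List.drop_sublist_drop_left B hik) (.refl _)

/-- (i,j) is a step index of Diff iff k = nextmatch(i,σ,B) < ∞ and
j is the minimum column index among all pivotal points of P□ in rows i+1,…,k. -/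
theorem stmt_15 {α : Type*} (A B : List α) (m n : ℕ)
    (hA : A.length = m) (hB : B.length = n) (σ : α)
    (hNonpos : ∀ i, 1 ≤ i → i ≤ n → ∀ j, 1 ≤ j → j ≤ m →
      density (Pmat A B) i j ≤ 0) :
    ∀ i ≤ n, ∀ j, 1 ≤ j → j ≤ m →
      (((LCS (substr B i n) (σ :: substr A 0 j) : ℤ) - Pmat A B i j) ≠
          ((LCS (substr B i n) (σ :: substr A 0 (j - 1)) : ℤ) - Pmat A B i (j - 1)) ↔
        ∃ k : ℕ, nextmatch i σ B = (k : ℕ∞) ∧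
          (∃ i', i + 1 ≤ i' ∧ i' ≤ k ∧ density (Pmat A B) i' j ≠ 0) ∧
          (∀ j', 1 ≤ j' → j' ≤ m →
            (∃ i', i + 1 ≤ i' ∧ i' ≤ k ∧ density (Pmat A B) i' j' ≠ 0) →
            j ≤ j')) := by
  subst hA hB
  intro i hi j hj1 hjm
  simp only [substr_length, substr_zero]
  by_cases hσ : σ ∈ B.drop i
  · obtain ⟨k, hk, hik, hkn, Y₁, hY₁, hsplit⟩ := exists_nextmatch_eq_of_mem hσ
    have hD : ∀ i', i + 1 ≤ i' → i' ≤ k → ∀ t, 1 ≤ t → t ≤ A.length →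
        density (Pmat A B) i' t ≤ 0 :=
      fun i' h1 h2 => hNonpos i' (by omega) (by omega)
    have hmono := sub_le_sub_of_density_nonpos hik.le fun i' h1 h2 => hD i' h1 h2 j hj1 hjm
    have hrow := Pmat_le_Pmat_of_le A B hik.le (j - 1)
    simp only [hk, Nat.cast_inj, exists_eq_left']
    rw [← sub_eq_zero_and_ne_zero_iff_first_pivot_column hik.le hD (by simp [Pmat_eq]) hj1 hjm]
    simp only [Pmat_eq] at hmono hrow ⊢
    rw [hsplit, LCS_append_cons_cons hY₁, LCS_append_cons_cons hY₁, ← hsplit]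
    push_cast
    omega
  · rw [nextmatch_eq_top_of_not_mem hσ]
    simp [LCS_cons_right_of_not_mem hσ, Pmat_eq]
end
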